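/- Let n ≥ 1 and let P = {p_1 > p_2 > ⋯ > p_k} be any subset of [n], listed in decreasing order, with the conventions p_0 = n + 1 and p_{k+1} = 1. Then, as an identity of integers, Σ_{Q ⊆ P} 2^{|Q|+1} · p_n(Q) = 2^{n−k} · Σ_{w ∈ W_k} Π_{t=0}^{k} (w_t + 1)^{p_t − p_{t+1}}, where the factors w_t + 1 may be negative. -/

import Mathlib

/-- The pinnacle set of a finite sequence `w` (given as a list): the set of values `w t`
at interior positions `t` with `w (t-1) < w t > w (t+1)`. -/
def pinSet (w : List ℕ) : Finset ℕ :=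
  (((List.range w.length).filter (fun t =>
      decide (0 < t ∧ t + 1 < w.length ∧
        w.getD (t - 1) 0 < w.getD t 0 ∧ w.getD (t + 1) 0 < w.getD t 0))).map
    (fun t => w.getD t 0)).toFinset

/-- `pinCount n P` is the number of permutations of `{1, …, n}` whose pinnacle set is `P`. -/
def pinCount (n : ℕ) (P : Finset ℕ) : ℕ :=
  ((List.range' 1 n).permutations.filter (fun w => decide (pinSet w = P))).length

/-- Height after `t` steps of the ±1 walk whose up-steps are recorded by `ε`. -/
def ht (k : ℕ) (ε : Fin k → Bool) (t : ℕ) : ℤ :=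
  ∑ s ∈ Finset.univ.filter (fun s : Fin k => (s : ℕ) < t),
    (if ε s then (1 : ℤ) else -1)

/-!
Both sides are computed by deleting the largest letter. For a word `u`, let `cutWeight P h u`
be the sum, over all ways of cutting `u` into `h` consecutive possibly empty blocks, of the
product of the block weights, a nonempty block with pinnacle set `Q ⊆ P` weighing `2 ^ (|Q| + 1)`;
the left side is the sum of `cutWeight P 1` over all permutations. Summing over the positions of a
new largest letter `v` is a derivation for the concatenation product. If `v ∉ P` it must sit at an
end of a block, which multiplies `cutWeight P h` by `2h`; if `v ∈ P` it either splits a block in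
two or fills an empty block, giving `h * (cutWeight P (h + 1) + cutWeight P (h - 1))`. The walk
sum started at height `h` obeys the same recurrences: a largest letter outside `P` raises the
exponent of the initial factor `h`, and one in `P` is the first step of the walk, to `h ± 1`.
-/

open Finset

def IsPinnacleAt (w : List ℕ) (t : ℕ) : Prop :=
  0 < t ∧ t + 1 < w.length ∧ w.getD (t - 1) 0 < w.getD t 0 ∧ w.getD (t + 1) 0 < w.getD t 0

theorem mem_pinSet {w : List ℕ} {x : ℕ} :
    x ∈ pinSet w ↔ ∃ t, IsPinnacleAt w t ∧ w.getD t 0 = x := by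
  simp only [pinSet, IsPinnacleAt, List.mem_toFinset, List.mem_map, List.mem_filter,
    List.mem_range, decide_eq_true_eq]
  constructor
  · rintro ⟨t, ⟨-, h⟩, rfl⟩
    exact ⟨t, h, rfl⟩
  · rintro ⟨t, h, rfl⟩
    exact ⟨t, ⟨by omega, h⟩, rfl⟩

theorem pinSet_subset_toFinset (w : List ℕ) : pinSet w ⊆ w.toFinset := by
  intro x hx
  obtain ⟨t, ⟨-, ht, -⟩, rfl⟩ := mem_pinSet.1 hx
  rw [List.getD_eq_getElem _ _ (by omega)]
  exact List.mem_toFinset.2 (List.getElem_mem _)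

section AppendCons

variable {A B : List ℕ} {v : ℕ}

theorem getD_append_cons_of_lt {t : ℕ} (ht : t < A.length) :
    (A ++ v :: B).getD t 0 = A.getD t 0 :=
  List.getD_append _ _ _ _ ht

theorem getD_append_cons_length : (A ++ v :: B).getD A.length 0 = v := by
  simp

theorem getD_append_cons_add (s : ℕ) :
    (A ++ v :: B).getD (A.length + 1 + s) 0 = B.getD s 0 := by
  rw [List.getD_append_right _ _ _ _ (by omega), show A.length + 1 + s - A.length = s + 1 by omega,
    List.getD_cons_succ]

theorem getD_lt_of_forall_lt {w : List ℕ} (hw : ∀ x ∈ w, x < v) {t : ℕ}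
    (ht : t < w.length) :
    w.getD t 0 < v := by
  rw [List.getD_eq_getElem _ _ ht]
  exact hw _ (List.getElem_mem _)

theorem isPinnacleAt_append_cons_of_lt (hA : ∀ x ∈ A, x < v) {t : ℕ} (ht : t < A.length) :
    IsPinnacleAt (A ++ v :: B) t ↔ IsPinnacleAt A t := by
  unfold IsPinnacleAt
  rw [getD_append_cons_of_lt ht, getD_append_cons_of_lt (by omega), List.length_append,
    List.length_cons]
  rcases Nat.lt_or_ge (t + 1) A.length with h | h
  · rw [getD_append_cons_of_lt h]
    omega
  · have : t + 1 = A.length := by omega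
    rw [this, getD_append_cons_length]
    have := getD_lt_of_forall_lt hA ht
    omega

theorem isPinnacleAt_append_cons_length (hA : ∀ x ∈ A, x < v) (hB : ∀ x ∈ B, x < v) :
    IsPinnacleAt (A ++ v :: B) A.length ↔ A ≠ [] ∧ B ≠ [] := by
  unfold IsPinnacleAt
  rw [getD_append_cons_length, List.length_append, List.length_cons, ← List.length_pos_iff,
    ← List.length_pos_iff]
  constructor
  · rintro ⟨h0, hlen, -⟩
    omega
  · rintro ⟨hA0, hB0⟩
    refine ⟨hA0, by omega, ?_, ?_⟩
    · rw [getD_append_cons_of_lt (by omega)]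
      exact getD_lt_of_forall_lt hA (by omega)
    · rw [show A.length + 1 = A.length + 1 + 0 by rfl, getD_append_cons_add]
      exact getD_lt_of_forall_lt hB hB0

theorem isPinnacleAt_append_cons_add (hB : ∀ x ∈ B, x < v) (s : ℕ) :
    IsPinnacleAt (A ++ v :: B) (A.length + 1 + s) ↔ IsPinnacleAt B s := by
  unfold IsPinnacleAt
  rw [getD_append_cons_add, show A.length + 1 + s + 1 = A.length + 1 + (s + 1) by omega,
    getD_append_cons_add, List.length_append, List.length_cons]
  rcases Nat.eq_zero_or_pos s with rfl | hs
  · rw [show A.length + 1 + 0 - 1 = A.length by omega, getD_append_cons_length]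
    constructor
    · rintro ⟨-, hlen, hlt, -⟩
      have := getD_lt_of_forall_lt hB (t := 0) (by omega)
      omega
    · rintro ⟨h, -⟩
      omega
  · rw [show A.length + 1 + s - 1 = A.length + 1 + (s - 1) by omega, getD_append_cons_add]
    omega

theorem pinSet_append_cons (hA : ∀ x ∈ A, x < v) (hB : ∀ x ∈ B, x < v) :
    pinSet (A ++ v :: B) =
      pinSet A ∪ pinSet B ∪ (if A ≠ [] ∧ B ≠ [] then {v} else ∅) := by
  ext x
  simp only [mem_union, mem_pinSet]
  constructor
  · rintro ⟨t, ht, rfl⟩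
    rcases lt_trichotomy t A.length with hlt | rfl | hgt
    · rw [isPinnacleAt_append_cons_of_lt hA hlt] at ht
      exact .inl (.inl ⟨t, ht, (getD_append_cons_of_lt hlt).symm⟩)
    · rw [isPinnacleAt_append_cons_length hA hB] at ht
      simp [ht]
    · obtain ⟨s, rfl⟩ : ∃ s, t = A.length + 1 + s := ⟨t - A.length - 1, by omega⟩
      rw [isPinnacleAt_append_cons_add hB] at ht
      exact .inl (.inr ⟨s, ht, (getD_append_cons_add s).symm⟩)
  · rintro ((⟨t, ht, rfl⟩ | ⟨s, hs, rfl⟩) | hv)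
    · have hlt : t < A.length := by unfold IsPinnacleAt at ht; omega
      exact ⟨t, (isPinnacleAt_append_cons_of_lt hA hlt).2 ht, getD_append_cons_of_lt hlt⟩
    · exact ⟨_, (isPinnacleAt_append_cons_add hB s).2 hs, getD_append_cons_add s⟩
    · split_ifs at hv with h
      · rw [mem_singleton.1 hv]
        exact ⟨_, (isPinnacleAt_append_cons_length hA hB).2 h, getD_append_cons_length⟩
      · simp at hv

end AppendCons

/-- The sum of `Φ a b` over all factorizations `u = a ++ b`. -/
def splitSum (Φ : List ℕ → List ℕ → ℤ) : List ℕ → ℤ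
  | [] => Φ [] []
  | y :: u => Φ [] (y :: u) + splitSum (fun a b => Φ (y :: a) b) u

def concatConv (f g : List ℕ → ℤ) (u : List ℕ) : ℤ :=
  splitSum (fun a b => f a * g b) u

def insertSum (v : ℕ) (F : List ℕ → ℤ) (w : List ℕ) : ℤ :=
  splitSum (fun a b => F (a ++ v :: b)) w

theorem splitSum_congr {Φ Ψ : List ℕ → List ℕ → ℤ} {u : List ℕ}
    (h : ∀ a b, a ++ b = u → Φ a b = Ψ a b) : splitSum Φ u = splitSum Ψ u := by
  induction u generalizing Φ Ψ with
  | nil => exact h [] [] rfl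
  | cons y u ih =>
    exact congrArg₂ (· + ·) (h _ _ rfl) (ih fun a b hab => h _ _ (by rw [← hab]; rfl))

theorem splitSum_add (Φ Ψ : List ℕ → List ℕ → ℤ) (u : List ℕ) :
    splitSum (fun a b => Φ a b + Ψ a b) u = splitSum Φ u + splitSum Ψ u := by
  induction u generalizing Φ Ψ with
  | nil => rfl
  | cons y u ih => simp only [splitSum, ih]; ring

theorem splitSum_const_mul (c : ℤ) (Φ : List ℕ → List ℕ → ℤ) (u : List ℕ) :
    splitSum (fun a b => c * Φ a b) u = c * splitSum Φ u := by
  induction u generalizing Φ with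
  | nil => rfl
  | cons y u ih => simp only [splitSum, ih]; ring

@[simp] theorem concatConv_nil (f g : List ℕ → ℤ) : concatConv f g [] = f [] * g [] := rfl

theorem concatConv_cons (f g : List ℕ → ℤ) (y : ℕ) (u : List ℕ) :
    concatConv f g (y :: u) = f [] * g (y :: u) + concatConv (fun a => f (y :: a)) g u := rfl

@[simp] theorem insertSum_nil (v : ℕ) (F : List ℕ → ℤ) : insertSum v F [] = F [v] := rfl

theorem insertSum_cons (v : ℕ) (F : List ℕ → ℤ) (y : ℕ) (w : List ℕ) :
    insertSum v F (y :: w) = F (v :: y :: w) + insertSum v (fun u => F (y :: u)) w := rfl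

theorem concatConv_add_left (f f' g : List ℕ → ℤ) (u : List ℕ) :
    concatConv (fun a => f a + f' a) g u = concatConv f g u + concatConv f' g u := by
  simp only [concatConv, add_mul, splitSum_add]

theorem concatConv_const_mul_left (c : ℤ) (f g : List ℕ → ℤ) (u : List ℕ) :
    concatConv (fun a => c * f a) g u = c * concatConv f g u := by
  simp only [concatConv, mul_assoc, splitSum_const_mul]

theorem concatConv_add_right (f g g' : List ℕ → ℤ) (u : List ℕ) :
    concatConv f (fun b => g b + g' b) u = concatConv f g u + concatConv f g' u := by
  simp only [concatConv, mul_add, splitSum_add]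

theorem concatConv_const_mul_right (c : ℤ) (f g : List ℕ → ℤ) (u : List ℕ) :
    concatConv f (fun b => c * g b) u = c * concatConv f g u := by
  simp only [concatConv, mul_left_comm _ c, splitSum_const_mul]

theorem insertSum_add (v : ℕ) (F G : List ℕ → ℤ) (w : List ℕ) :
    insertSum v (fun u => F u + G u) w = insertSum v F w + insertSum v G w :=
  splitSum_add _ _ w

theorem insertSum_const_mul (v : ℕ) (c : ℤ) (F : List ℕ → ℤ) (w : List ℕ) :
    insertSum v (fun u => c * F u) w = c * insertSum v F w :=
  splitSum_const_mul c _ w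

theorem concatConv_congr {f f' g g' : List ℕ → ℤ} {u : List ℕ}
    (h : ∀ a b, a ++ b = u → f a = f' a ∧ g b = g' b) :
    concatConv f g u = concatConv f' g' u :=
  splitSum_congr fun a b hab => by rw [(h a b hab).1, (h a b hab).2]

def nilInd (u : List ℕ) : ℤ := if u = [] then 1 else 0

@[simp] theorem nilInd_nil : nilInd [] = 1 := rfl

@[simp] theorem nilInd_cons (y : ℕ) (u : List ℕ) : nilInd (y :: u) = 0 := rfl

theorem concatConv_zero_left (g : List ℕ → ℤ) (u : List ℕ) :
    concatConv (fun _ => 0) g u = 0 := by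
  simpa using concatConv_const_mul_left 0 (fun _ => 0) g u

theorem concatConv_nilInd_left (f : List ℕ → ℤ) (u : List ℕ) :
    concatConv nilInd f u = f u := by
  cases u with
  | nil => simp
  | cons y u => simp [concatConv_cons, concatConv_zero_left]

theorem concatConv_nilInd_right (f : List ℕ → ℤ) (u : List ℕ) :
    concatConv f nilInd u = f u := by
  induction u generalizing f with
  | nil => simp
  | cons y u ih => simp [concatConv_cons, ih]

theorem concatConv_assoc (f g k : List ℕ → ℤ) (u : List ℕ) :
    concatConv (concatConv f g) k u = concatConv f (concatConv g k) u := by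
  induction u generalizing f with
  | nil => simp [mul_assoc]
  | cons y u ih =>
    simp only [concatConv_cons, concatConv_nil, concatConv_add_left,
      concatConv_const_mul_left, ih]
    ring

theorem insertSum_nilInd (v : ℕ) (w : List ℕ) : insertSum v nilInd w = 0 := by
  simpa [insertSum, nilInd] using splitSum_const_mul 0 (fun _ _ => 0) w

theorem insertSum_concatConv (v : ℕ) (f g : List ℕ → ℤ) (w : List ℕ) :
    insertSum v (concatConv f g) w =
      concatConv (insertSum v f) g w + concatConv f (insertSum v g) w := by
  induction w generalizing f with
  | nil =>
    simp only [insertSum_nil, concatConv_cons, concatConv_nil]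
    ring
  | cons y w ih =>
    simp only [insertSum_cons, concatConv_cons, insertSum_add, insertSum_const_mul,
      concatConv_add_left, ih, insertSum_nil]
    ring

def pinWeight (P : Finset ℕ) (u : List ℕ) : ℤ :=
  if pinSet u ⊆ P then 2 ^ (pinSet u).card * (if u = [] then 1 else 2) else 0

section PinWeight

variable {P : Finset ℕ} {A B : List ℕ} {v : ℕ}

@[simp] theorem pinSet_nil : pinSet [] = ∅ := rfl

@[simp] theorem pinWeight_nil : pinWeight P [] = 1 := by
  simp [pinWeight]

theorem pinWeight_of_ne_nil {u : List ℕ} (hu : u ≠ []) :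
    pinWeight P u = if pinSet u ⊆ P then 2 ^ ((pinSet u).card + 1) else 0 := by
  simp [pinWeight, hu, pow_succ]

theorem pinSet_cons_of_forall_lt (hB : ∀ x ∈ B, x < v) : pinSet (v :: B) = pinSet B := by
  simpa using pinSet_append_cons (A := []) (by simp) hB

theorem pinSet_append_singleton_of_forall_lt (hA : ∀ x ∈ A, x < v) :
    pinSet (A ++ [v]) = pinSet A := by
  simpa using pinSet_append_cons (B := []) hA (by simp)

theorem pinWeight_append_cons_of_notMem (hv : v ∉ P) (hA : ∀ x ∈ A, x < v)
    (hB : ∀ x ∈ B, x < v) :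
    pinWeight P (A ++ v :: B) = nilInd A * pinWeight P B + pinWeight P A * nilInd B := by
  rcases eq_or_ne A [] with rfl | hA0 <;> rcases eq_or_ne B [] with rfl | hB0
  · simp [pinWeight, nilInd, pinSet_cons_of_forall_lt hB]
  · simp [pinWeight, nilInd, pinSet_cons_of_forall_lt hB, hB0]
  · simp [pinWeight, nilInd, pinSet_append_singleton_of_forall_lt hA, hA0]
  · have : ¬ pinSet (A ++ v :: B) ⊆ P := fun h =>
      hv (h (by simp [pinSet_append_cons hA hB, hA0, hB0]))
    simp [pinWeight, nilInd, this, hA0, hB0]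

theorem pinWeight_append_cons_of_mem (hv : v ∈ P) (hA : ∀ x ∈ A, x < v)
    (hB : ∀ x ∈ B, x < v) (hAB : (A ++ B).Nodup) :
    pinWeight P (A ++ v :: B) = pinWeight P A * pinWeight P B + nilInd A * nilInd B := by
  rcases eq_or_ne A [] with rfl | hA0 <;> rcases eq_or_ne B [] with rfl | hB0
  · simp [pinWeight, nilInd, pinSet_cons_of_forall_lt hB]
  · simp [pinWeight, nilInd, pinSet_cons_of_forall_lt hB, hB0]
  · simp [pinWeight, nilInd, pinSet_append_singleton_of_forall_lt hA, hA0]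
  · have hdisj : Disjoint (pinSet A) (pinSet B) :=
      Finset.disjoint_of_subset_left (pinSet_subset_toFinset A)
        (Finset.disjoint_of_subset_right (pinSet_subset_toFinset B)
          (List.disjoint_toFinset_iff_disjoint.2 (List.disjoint_of_nodup_append hAB)))
    have hvA : v ∉ pinSet A := fun h =>
      lt_irrefl v (hA v (by simpa using pinSet_subset_toFinset A h))
    have hvB : v ∉ pinSet B := fun h =>
      lt_irrefl v (hB v (by simpa using pinSet_subset_toFinset B h))
    have hpin : pinSet (A ++ v :: B) = pinSet A ∪ pinSet B ∪ {v} := by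
      rw [pinSet_append_cons hA hB, if_pos ⟨hA0, hB0⟩]
    have hcard : (pinSet (A ++ v :: B)).card = (pinSet A).card + (pinSet B).card + 1 := by
      rw [hpin, card_union_of_disjoint (by simp [hvA, hvB]), card_union_of_disjoint hdisj,
        card_singleton]
    have hsub : pinSet (A ++ v :: B) ⊆ P ↔ pinSet A ⊆ P ∧ pinSet B ⊆ P := by
      simp [hpin, insert_subset_iff, union_subset_iff, hv]
    simp only [pinWeight, nilInd, hcard, hsub, hA0, hB0, List.append_ne_nil_of_right_ne_nil A
      (List.cons_ne_nil v B), if_false, mul_zero, add_zero, ite_and]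
    split_ifs <;> ring

end PinWeight

section PinWeightInsert

variable {P : Finset ℕ} {v : ℕ} {w : List ℕ}

theorem insertSum_pinWeight_of_notMem (hv : v ∉ P) (hw : ∀ x ∈ w, x < v) :
    insertSum v (pinWeight P) w = 2 * pinWeight P w := by
  have : insertSum v (pinWeight P) w =
      concatConv nilInd (pinWeight P) w + concatConv (pinWeight P) nilInd w := by
    rw [insertSum, concatConv, concatConv, ← splitSum_add]
    refine splitSum_congr fun a b hab => ?_
    subst hab
    obtain ⟨ha, hb⟩ := List.forall_mem_append.1 hw
    exact pinWeight_append_cons_of_notMem hv ha hb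
  rw [this, concatConv_nilInd_left, concatConv_nilInd_right, two_mul]

theorem insertSum_pinWeight_of_mem (hv : v ∈ P) (hw : ∀ x ∈ w, x < v) (hnd : w.Nodup) :
    insertSum v (pinWeight P) w = concatConv (pinWeight P) (pinWeight P) w + nilInd w := by
  rw [← concatConv_nilInd_left nilInd w, insertSum, concatConv, concatConv, ← splitSum_add]
  refine splitSum_congr fun a b hab => ?_
  subst hab
  obtain ⟨ha, hb⟩ := List.forall_mem_append.1 hw
  exact pinWeight_append_cons_of_mem hv ha hb hnd

theorem pinWeight_erase_of_notMem {u : List ℕ} (hv : v ∉ u) :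
    pinWeight (P.erase v) u = pinWeight P u := by
  have : pinSet u ⊆ P.erase v ↔ pinSet u ⊆ P := by
    rw [subset_erase]
    exact and_iff_left fun h => hv (by simpa using pinSet_subset_toFinset u h)
  simp only [pinWeight, this]

end PinWeightInsert

def cutWeight (P : Finset ℕ) : ℕ → List ℕ → ℤ
  | 0 => nilInd
  | h + 1 => concatConv (pinWeight P) (cutWeight P h)

section CutWeight

variable {P : Finset ℕ} {v : ℕ}

theorem cutWeight_succ (h : ℕ) :
    cutWeight P (h + 1) = concatConv (pinWeight P) (cutWeight P h) := rfl

@[simp] theorem cutWeight_nil (h : ℕ) : cutWeight P h [] = 1 := by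
  induction h with
  | zero => rfl
  | succ h ih => simp [cutWeight_succ, ih]

theorem cutWeight_one : cutWeight P 1 = pinWeight P :=
  funext (concatConv_nilInd_right (pinWeight P))

theorem cutWeight_erase_of_notMem (h : ℕ) {w : List ℕ} (hv : v ∉ w) :
    cutWeight (P.erase v) h w = cutWeight P h w := by
  induction h generalizing w with
  | zero => rfl
  | succ h ih =>
    refine concatConv_congr fun a b hab => ?_
    subst hab
    exact ⟨pinWeight_erase_of_notMem fun hva => hv (by simp [hva]),
      ih fun hvb => hv (by simp [hvb])⟩

theorem insertSum_cutWeight_of_notMem (hv : v ∉ P) (h : ℕ) {w : List ℕ}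
    (hw : ∀ x ∈ w, x < v) : insertSum v (cutWeight P h) w = 2 * h * cutWeight P h w := by
  induction h generalizing w with
  | zero => simp [cutWeight, insertSum_nilInd]
  | succ h ih =>
    have hfirst : concatConv (insertSum v (pinWeight P)) (cutWeight P h) w =
        2 * cutWeight P (h + 1) w := by
      rw [cutWeight_succ, ← concatConv_const_mul_left]
      exact concatConv_congr fun a b hab =>
        ⟨insertSum_pinWeight_of_notMem hv (List.forall_mem_append.1 (hab ▸ hw)).1, rfl⟩
    have hrest : concatConv (pinWeight P) (insertSum v (cutWeight P h)) w =
        2 * h * cutWeight P (h + 1) w := by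
      rw [cutWeight_succ, ← concatConv_const_mul_right]
      exact concatConv_congr fun a b hab => ⟨rfl, ih (List.forall_mem_append.1 (hab ▸ hw)).2⟩
    rw [cutWeight_succ, insertSum_concatConv, ← cutWeight_succ, hfirst, hrest]
    push_cast
    ring

/-- At `h = 0` the truncated `h - 1` is harmless because of the factor `h`. -/
theorem mul_concatConv_cutWeight_pred (h : ℕ) (w : List ℕ) :
    (h : ℤ) * concatConv (pinWeight P) (cutWeight P (h - 1)) w = h * cutWeight P h w := by
  cases h <;> simp [cutWeight_succ]

theorem insertSum_cutWeight_of_mem (hv : v ∈ P) (h : ℕ) {w : List ℕ}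
    (hw : ∀ x ∈ w, x < v) (hnd : w.Nodup) :
    insertSum v (cutWeight P h) w = h * (cutWeight P (h + 1) w + cutWeight P (h - 1) w) := by
  induction h generalizing w with
  | zero => simp [cutWeight, insertSum_nilInd]
  | succ h ih =>
    have hfirst : concatConv (insertSum v (pinWeight P)) (cutWeight P h) w =
        cutWeight P (h + 2) w + cutWeight P h w := by
      rw [concatConv_congr (g' := cutWeight P h)
          (f' := fun a => concatConv (pinWeight P) (pinWeight P) a + nilInd a) fun a b hab =>
          ⟨insertSum_pinWeight_of_mem hv (List.forall_mem_append.1 (hab ▸ hw)).1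
            (hab ▸ hnd).of_append_left, rfl⟩,
        concatConv_add_left, concatConv_assoc, concatConv_nilInd_left]
      rfl
    have hrest : concatConv (pinWeight P) (insertSum v (cutWeight P h)) w =
        h * (cutWeight P (h + 2) w + cutWeight P h w) := by
      rw [concatConv_congr (f' := pinWeight P)
          (g' := fun b => h * (cutWeight P (h + 1) b + cutWeight P (h - 1) b)) fun a b hab =>
          ⟨rfl, ih (List.forall_mem_append.1 (hab ▸ hw)).2 (hab ▸ hnd).of_append_right⟩,
        concatConv_const_mul_right, concatConv_add_right, mul_add, mul_concatConv_cutWeight_pred,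
        ← mul_add]
      rfl
    rw [cutWeight_succ, insertSum_concatConv, hfirst, hrest, Nat.add_sub_cancel]
    push_cast
    ring

end CutWeight

/-- Uses `List.permutations'`, whose recursion inserts the head into every position of each
permutation of the tail (`permSum_cons`). -/
def permSum (Φ : List ℕ → ℤ) (l : List ℕ) : ℤ :=
  (l.permutations'.map Φ).sum

theorem sum_map_permutations'Aux (v : ℕ) (F : List ℕ → ℤ) (w : List ℕ) :
    ((List.permutations'Aux v w).map F).sum = insertSum v F w := by
  induction w generalizing F with
  | nil => simp
  | cons y w ih =>
    simp only [List.permutations'Aux, List.map_cons, List.sum_cons, List.map_map]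
    rw [insertSum_cons, ← ih]
    rfl

@[simp] theorem permSum_nil (Φ : List ℕ → ℤ) : permSum Φ [] = Φ [] := by
  simp [permSum]

theorem permSum_cons (Φ : List ℕ → ℤ) (v : ℕ) (l : List ℕ) :
    permSum Φ (v :: l) = permSum (insertSum v Φ) l := by
  rw [permSum, List.permutations', List.flatMap, List.map_flatten, List.sum_flatten,
    List.map_map, List.map_map, permSum]
  simp only [Function.comp_def, sum_map_permutations'Aux]

theorem permSum_congr {Φ Ψ : List ℕ → ℤ} {l : List ℕ}
    (h : ∀ w, w.Perm l → Φ w = Ψ w) :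
    permSum Φ l = permSum Ψ l :=
  congrArg List.sum (List.map_congr_left fun w hw => h w (List.mem_permutations'.1 hw))

theorem permSum_add (Φ Ψ : List ℕ → ℤ) (l : List ℕ) :
    permSum (fun w => Φ w + Ψ w) l = permSum Φ l + permSum Ψ l :=
  List.sum_map_add

theorem permSum_const_mul (c : ℤ) (Φ : List ℕ → ℤ) (l : List ℕ) :
    permSum (fun w => c * Φ w) l = c * permSum Φ l :=
  List.sum_map_mul_left _ _ _

theorem List.Perm.permSum_eq (Φ : List ℕ → ℤ) {l l' : List ℕ} (h : l.Perm l') :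
    permSum Φ l = permSum Φ l' :=
  (h.permutations'.map Φ).sum_eq

theorem ht_zero (k : ℕ) (ε : Fin k → Bool) : ht k ε 0 = 0 := by
  simp [ht]

theorem ht_succ_cons (k : ℕ) (c : Bool) (ε : Fin k → Bool) (t : ℕ) :
    ht (k + 1) (Fin.cons c ε) (t + 1) = (if c then 1 else -1) + ht k ε t := by
  rw [ht, ht, Finset.sum_filter, Finset.sum_filter, Fin.sum_univ_succ]
  simp

def walkSum (k : ℕ) (e : ℕ → ℕ) (b : ℤ) : ℤ :=
  ∑ ε : Fin k → Bool, ∏ t ∈ range (k + 1), (ht k ε t + b) ^ e t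

theorem walkSum_add_ite_zero (k : ℕ) (e : ℕ → ℕ) (b : ℤ) :
    walkSum k (fun t => e t + if t = 0 then 1 else 0) b = b * walkSum k e b := by
  simp only [walkSum, mul_sum]
  refine sum_congr rfl fun ε _ => ?_
  rw [prod_range_succ', prod_range_succ', ht_zero, zero_add]
  simp only [Nat.add_one_ne_zero, ↓reduceIte, add_zero, pow_succ]
  ring

theorem walkSum_succ (k : ℕ) (e : ℕ → ℕ) (b : ℤ) :
    walkSum (k + 1) e b =
      b ^ e 0 * (walkSum k (fun t => e (t + 1)) (b + 1) +
        walkSum k (fun t => e (t + 1)) (b - 1)) := by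
  have hstep (c : Bool) (ε : Fin k → Bool) :
      ∏ t ∈ range (k + 2), (ht (k + 1) (Fin.cons c ε) t + b) ^ e t =
        b ^ e 0 * ∏ t ∈ range (k + 1),
          (ht k ε t + (b + if c then 1 else -1)) ^ e (t + 1) := by
    rw [prod_range_succ', ht_zero, zero_add, mul_comm]
    congr 1
    refine prod_congr rfl fun t _ => ?_
    rw [ht_succ_cons]
    ring_nf
  rw [walkSum, ← (Fin.consEquiv fun _ => Bool).sum_comp, Fintype.sum_prod_type,
    Fintype.sum_bool]
  simp only [Fin.consEquiv, Equiv.coe_fn_mk, hstep, ← mul_sum, walkSum]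
  simp only [if_true, Bool.false_eq_true, if_false, ← sub_eq_add_neg, mul_add]

def level (P : Finset ℕ) (u : ℕ) : ℕ := #(P.filter (u < ·))

def walkFormula (P : Finset ℕ) (l : List ℕ) (b : ℤ) : ℤ :=
  2 ^ (l.length - #P) * walkSum #P (fun t => l.countP (level P · = t)) b

section WalkFormula

variable {P : Finset ℕ} {v : ℕ} {l : List ℕ}

theorem level_eq_zero (hP : ∀ y ∈ P, y ≤ v) : level P v = 0 := by
  simpa [level, filter_eq_empty_iff] using hP

theorem level_of_lt (hv : v ∈ P) {u : ℕ} (hu : u < v) :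
    level P u = level (P.erase v) u + 1 := by
  have hvu : v ∈ P.filter (u < ·) := mem_filter.2 ⟨hv, hu⟩
  rw [level, level, filter_erase, card_erase_of_mem hvu,
    Nat.sub_add_cancel (card_pos.2 ⟨v, hvu⟩)]

@[simp] theorem walkFormula_nil (b : ℤ) : walkFormula ∅ [] b = 1 := by
  rw [walkFormula, card_empty, walkSum, Fintype.sum_unique]
  simp

theorem walkFormula_cons_of_forall_lt (hl : ∀ x ∈ l, x < v) (hP : ∀ y ∈ P, y ∈ l)
    (b : ℤ) : walkFormula P (v :: l) b = 2 * b * walkFormula P l b := by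
  have hcard : #P ≤ l.length :=
    (card_le_card fun y hy => List.mem_toFinset.2 (hP y hy)).trans (List.toFinset_card_le l)
  have hlevel : level P v = 0 := level_eq_zero fun y hy => (hl y (hP y hy)).le
  have hcount (t : ℕ) : (v :: l).countP (level P · = t) =
      l.countP (level P · = t) + if t = 0 then 1 else 0 := by
    simp [List.countP_cons, hlevel, eq_comm]
  rw [walkFormula, walkFormula, funext hcount, walkSum_add_ite_zero, List.length_cons,
    Nat.sub_add_comm hcard, pow_succ]
  ring

theorem walkFormula_cons_of_mem (hv : v ∈ P) (hl : ∀ x ∈ l, x < v)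
    (hP : ∀ y ∈ P, y ∈ v :: l) (b : ℤ) :
    walkFormula P (v :: l) b =
      b * (walkFormula (P.erase v) l (b + 1) + walkFormula (P.erase v) l (b - 1)) := by
  have hcard : #P = #(P.erase v) + 1 := (card_erase_add_one hv).symm
  have hle (y) (hy : y ∈ P) : y ≤ v := by
    rcases List.mem_cons.1 (hP y hy) with rfl | hy
    · exact le_rfl
    · exact (hl y hy).le
  have hcount_zero : (v :: l).countP (level P · = 0) = 1 := by
    rw [List.countP_cons, List.countP_eq_zero.2 fun x hx => ?_]
    · simp [level_eq_zero hle]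
    · simp [level_of_lt hv (hl x hx)]
  have hcount_succ (t : ℕ) : (v :: l).countP (level P · = t + 1) =
      l.countP (level (P.erase v) · = t) := by
    rw [List.countP_cons, level_eq_zero hle]
    simp only [Nat.zero_ne_add_one, decide_false, Bool.false_eq_true, if_false, add_zero]
    exact List.countP_congr fun x hx => by simp [level_of_lt hv (hl x hx)]
  rw [walkFormula, hcard, walkSum_succ, hcount_zero, pow_one, funext hcount_succ,
    walkFormula, walkFormula, List.length_cons, Nat.add_sub_add_right]
  ring

end WalkFormula

theorem permSum_cutWeight_eq_walkFormula {l : List ℕ} (hl : l.Pairwise (· > ·)) {P : Finset ℕ}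
    (hP : ∀ y ∈ P, y ∈ l) (h : ℕ) : permSum (cutWeight P h) l = walkFormula P l h := by
  induction l generalizing P h with
  | nil =>
    obtain rfl : P = ∅ := eq_empty_of_forall_notMem fun y hy => by simpa using hP y hy
    simp
  | cons v l ih =>
    obtain ⟨hvl, hl⟩ := List.pairwise_cons.1 hl
    have hlt {w : List ℕ} (hw : w.Perm l) : ∀ x ∈ w, x < v := fun x hx => hvl x (hw.subset hx)
    have hv_notMem {w : List ℕ} (hw : w.Perm l) : v ∉ w := fun hv => lt_irrefl v (hlt hw v hv)
    rw [permSum_cons]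
    by_cases hv : v ∈ P
    · have hP' : ∀ y ∈ P.erase v, y ∈ l := fun y hy =>
        (List.mem_cons.1 (hP y (mem_of_mem_erase hy))).resolve_left (ne_of_mem_erase hy)
      rw [permSum_congr (Ψ := fun w => h * (cutWeight (P.erase v) (h + 1) w +
          cutWeight (P.erase v) (h - 1) w)) fun w hw => by
        rw [insertSum_cutWeight_of_mem hv h (hlt hw) (hw.nodup_iff.2 hl.nodup),
          cutWeight_erase_of_notMem _ (hv_notMem hw), cutWeight_erase_of_notMem _ (hv_notMem hw)],
        permSum_const_mul, permSum_add, ih hl hP', ih hl hP', walkFormula_cons_of_mem hv hvl hP]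
      cases h <;> simp
    · have hP' : ∀ y ∈ P, y ∈ l := fun y hy =>
        (List.mem_cons.1 (hP y hy)).resolve_left fun h => hv (h ▸ hy)
      rw [permSum_congr fun w hw => insertSum_cutWeight_of_notMem hv h (hlt hw),
        permSum_const_mul, ih hl hP', walkFormula_cons_of_forall_lt hvl hP']

theorem sum_powerset_mul_length_filter_pinSet (P : Finset ℕ) (L : List (List ℕ))
    (hL : ∀ u ∈ L, u ≠ []) :
    ∑ Q ∈ P.powerset, 2 ^ (#Q + 1) * ((L.filter fun w => decide (pinSet w = Q)).length : ℤ) =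
      (L.map (pinWeight P)).sum := by
  induction L with
  | nil => simp
  | cons u L ih =>
    have hlength (Q : Finset ℕ) :
        (((u :: L).filter fun w => decide (pinSet w = Q)).length : ℤ) =
          (L.filter fun w => decide (pinSet w = Q)).length + if pinSet u = Q then 1 else 0 := by
      by_cases h : pinSet u = Q <;> simp [h]
    rw [List.map_cons, List.sum_cons, ← ih fun w hw => hL w (List.mem_cons_of_mem u hw),
      pinWeight_of_ne_nil (hL u List.mem_cons_self)]
    simp only [hlength, mul_add, sum_add_distrib, mul_ite, mul_one, mul_zero, sum_ite_eq,
      mem_powerset]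
    ring

theorem List.countP_range'_one (n : ℕ) (q : ℕ → Prop) [DecidablePred q] :
    (List.range' 1 n).countP (fun u => decide (q u)) = #((Icc 1 n).filter q) := by
  rw [Nat.Icc_eq_range', card_def, filter_val, ← Multiset.countP_eq_card_filter]
  simp

theorem exists_succ_le_lt (p : ℕ → ℕ) {m u : ℕ} (h0 : u < p 0) (hm : p m ≤ u) :
    ∃ t < m, p (t + 1) ≤ u ∧ u < p t := by
  induction m with
  | zero => omega
  | succ m ih =>
    by_cases h : p m ≤ u
    · obtain ⟨t, ht, hu⟩ := ih h
      exact ⟨t, by omega, hu⟩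
    · exact ⟨m, by omega, hm, by omega⟩

section Levels

variable {n k : ℕ} {p : ℕ → ℕ}

theorem level_image_of_mem_Ico (hdec : ∀ s t : ℕ, 1 ≤ s → s < t → t ≤ k → p t < p s)
    {t u : ℕ} (ht : t ≤ k) (hu : u ∈ Ico (p (t + 1)) (p t)) :
    level ((Icc 1 k).image p) u = t := by
  rw [mem_Ico] at hu
  have hinj : Set.InjOn p (Icc 1 k : Set ℕ) := by
    intro a ha b hb hab
    simp only [coe_Icc, Set.mem_Icc] at ha hb
    by_contra hne
    rcases Nat.lt_or_gt_of_ne hne with h | h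
    · exact absurd hab (hdec a b ha.1 h hb.2).ne'
    · exact absurd hab (hdec b a hb.1 h ha.2).ne
  have hfilter : (Icc 1 k).filter (fun s => u < p s) = Icc 1 t := by
    ext s
    simp only [mem_filter, mem_Icc]
    constructor
    · rintro ⟨⟨hs1, hsk⟩, hus⟩
      refine ⟨hs1, Nat.le_of_not_lt fun hts => ?_⟩
      rcases Nat.lt_or_ge (t + 1) s with hlt | hle
      · have := hdec (t + 1) s (by omega) hlt hsk
        omega
      · obtain rfl : s = t + 1 := by omega
        omega
    · rintro ⟨hs1, hst⟩
      refine ⟨⟨hs1, by omega⟩, ?_⟩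
      rcases Nat.eq_or_lt_of_le hst with rfl | hlt
      · exact hu.2
      · have := hdec s t hs1 hlt ht
        omega
  rw [level, filter_image, card_image_of_injOn (hinj.mono (coe_subset.2 (filter_subset _ _))),
    hfilter, Nat.card_Icc, Nat.add_sub_cancel]

theorem countP_level_image (hP : (Icc 1 k).image p ⊆ Icc 1 n) (hp0 : p 0 = n + 1)
    (hpk : p (k + 1) = 1) (hdec : ∀ s t : ℕ, 1 ≤ s → s < t → t ≤ k → p t < p s)
    {t : ℕ} (ht : t ≤ k) :
    (List.range' 1 n).countP (level ((Icc 1 k).image p) · = t) = p t - p (t + 1) := by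
  have hbound {s : ℕ} (hs : s ≤ k + 1) : 1 ≤ p s ∧ p s ≤ n + 1 := by
    rcases Nat.eq_zero_or_pos s with rfl | hs0
    · omega
    rcases Nat.eq_or_lt_of_le hs with rfl | hsk
    · omega
    have := mem_Icc.1 (hP (mem_image_of_mem p (mem_Icc.2 ⟨hs0, by omega⟩)))
    omega
  have hlevel : (Icc 1 n).filter (level ((Icc 1 k).image p) · = t) = Ico (p (t + 1)) (p t) := by
    ext u
    rw [mem_filter, mem_Icc]
    constructor
    · rintro ⟨hu, rfl⟩
      obtain ⟨t', ht', hu'⟩ := exists_succ_le_lt p (m := k + 1) (u := u) (by omega) (by omega)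
      rwa [level_image_of_mem_Ico hdec (by omega) (mem_Ico.2 hu'), mem_Ico]
    · intro hu
      have := hbound (s := t) (by omega)
      have := hbound (s := t + 1) (by omega)
      exact ⟨by rw [mem_Ico] at hu; omega, level_image_of_mem_Ico hdec ht hu⟩
  rw [List.countP_range'_one, hlevel, Nat.card_Ico]

end Levels

theorem weighted_sum_formula_all_walks (n k : ℕ) (hn : 1 ≤ n) (P : Finset ℕ)
    (hP : P ⊆ Finset.Icc 1 n) (hk : P.card = k) (p : ℕ → ℕ)
    (hp0 : p 0 = n + 1) (hpk : p (k + 1) = 1)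
    (hdec : ∀ s t : ℕ, 1 ≤ s → s < t → t ≤ k → p t < p s)
    (himg : P = (Finset.Icc 1 k).image p) :
    ∑ Q ∈ P.powerset, 2 ^ (Q.card + 1) * (pinCount n Q : ℤ) =
      2 ^ (n - k) *
        ∑ ε : Fin k → Bool,
          ∏ t ∈ Finset.range (k + 1), (ht k ε t + 1) ^ (p t - p (t + 1)) := by
  set L := List.range' 1 n
  have hL : ∀ u ∈ L.permutations, u ≠ [] := fun u hu hnil => by
    have := (List.mem_permutations.1 hu).length_eq
    rw [hnil, List.length_nil, List.length_range'] at this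
    omega
  have hsorted : L.reverse.Pairwise (· > ·) :=
    List.pairwise_reverse.2 (List.pairwise_lt_range' (s := 1) (n := n))
  have hPL : ∀ y ∈ P, y ∈ L.reverse := fun y hy => by
    have := mem_Icc.1 (hP hy)
    simp only [L, List.mem_reverse, List.mem_range'_1]
    omega
  calc ∑ Q ∈ P.powerset, 2 ^ (#Q + 1) * (pinCount n Q : ℤ)
      = (L.permutations.map (pinWeight P)).sum := sum_powerset_mul_length_filter_pinSet P _ hL
    _ = permSum (cutWeight P 1) L.reverse := by
      rw [cutWeight_one, (List.reverse_perm L).permSum_eq, permSum,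
        ((List.permutations_perm_permutations' L).map _).sum_eq]
    _ = walkFormula P L.reverse 1 := permSum_cutWeight_eq_walkFormula hsorted hPL 1
    _ = _ := by
      rw [walkFormula, List.length_reverse, List.length_range', hk, walkSum]
      subst himg
      refine congrArg _ (sum_congr rfl fun ε _ => prod_congr rfl fun t ht => ?_)
      rw [List.countP_reverse, countP_level_image hP hp0 hpk hdec
        (Nat.lt_succ_iff.1 (mem_range.1 ht))]
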